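/- arXiv:1410.1186 — 4 statements merged into one kernel-verified Lean document; each statement's English description precedes it below -/
import Mathlib

section
/- As formal power series in q^{1/2} (equivalently, after substituting q → t², as formal power series in t), the following Jacobi-type triple product identity holds: ∏_{i=1}^∞ (1 - q^{2i})(1 + z q^{2i - 1/2})(1 + z^{-1} q^{2i - 3/2}) = ∑_{m ∈ ℤ} z^m q^{m(2m+1)/2}, where z is a formal Laurent variable. -/
open PowerSeries LaurentPolynomial

/-- `P` is the limit of the partial products of `f` in the formal power series topology. -/
def PSHasProd {R : Type*} [CommRing R] (f : ℕ → PowerSeries R) (P : PowerSeries R) : Prop :=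
  ∀ N : ℕ, ∃ M : ℕ, ∀ m ≥ M,
    PowerSeries.trunc N (∏ i ∈ Finset.range m, f i) = PowerSeries.trunc N P

/-- `S` is the limit over finite subsets of `ℤ` of the partial sums of `g` in the
formal power series topology. -/
def PSHasSumZ {R : Type*} [CommRing R] (g : ℤ → PowerSeries R) (S : PowerSeries R) : Prop :=
  ∀ N : ℕ, ∃ A : Finset ℤ, ∀ B : Finset ℤ, A ⊆ B →
    PowerSeries.trunc N (∑ n ∈ B, g n) = PowerSeries.trunc N S

/-!
Multiplying out the first `n` factor pairs `(1 + z X^{4i+3})(1 + z⁻¹ X^{4i+1})` gives the finite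
Jacobi identity: the coefficient of `z^m` is `X^{m(2m+1)} (Q;Q)_{2n} / ((Q;Q)_{n+m} (Q;Q)_{n-m})`
with `Q = X⁴`, since these coefficients satisfy the three-term recurrence produced by the next
factor pair. After multiplying by `(Q;Q)_n`, the coefficient of `z^m` agrees with `X^{m(2m+1)}`
modulo `X^{4(n-|m|+1)}`, so letting `n → ∞` proves the identity one truncation at a time.
-/

namespace JacobiTripleProduct

open Finset

variable {R : Type*} [CommRing R]

/-- `(Q; Q)_n` for `Q = X⁴`, i.e. `(q²; q²)_n` in the variable `X = q^{1/2}`. -/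
noncomputable def qPoch (n : ℕ) : R⟦X⟧ := ∏ i ∈ range n, (1 - X ^ (4 * (i + 1)))

lemma qPoch_zero : qPoch (R := R) 0 = 1 := prod_range_zero _

lemma qPoch_succ (n : ℕ) : qPoch (R := R) (n + 1) = qPoch n * (1 - X ^ (4 * (n + 1))) :=
  prod_range_succ _ _

lemma isUnit_one_sub_X_pow {k : ℕ} (hk : k ≠ 0) : IsUnit (1 - X ^ k : R⟦X⟧) := by
  simp [isUnit_iff_constantCoeff, hk]

lemma isUnit_qPoch (n : ℕ) : IsUnit (qPoch (R := R) n) :=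
  IsUnit.prod_iff.2 fun i _ => isUnit_one_sub_X_pow (by omega)

lemma X_pow_dvd_qPoch_sub_qPoch {j k : ℕ} (h : j ≤ k) :
    (X : R⟦X⟧) ^ (4 * (j + 1)) ∣ qPoch k - qPoch j := by
  induction k, h using Nat.le_induction with
  | base => simp
  | succ k hjk ih =>
    rw [qPoch_succ, show qPoch k * (1 - X ^ (4 * (k + 1))) - qPoch j
      = (qPoch k - qPoch j) - qPoch (R := R) k * X ^ (4 * (k + 1)) by ring]
    exact dvd_sub ih (dvd_mul_of_dvd_right (pow_dvd_pow _ (by omega)) _)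

lemma X_pow_dvd_qPoch_mul_qPoch_sub {j k n n' : ℕ} (hj : j ≤ n) (hk : j ≤ k) (hk' : k ≤ n') :
    (X : R⟦X⟧) ^ (4 * (j + 1)) ∣ qPoch n * qPoch n' - qPoch j * qPoch k := by
  rw [show qPoch n * qPoch n' - qPoch j * qPoch k
    = qPoch n * (qPoch n' - qPoch k) + (qPoch n - qPoch j) * qPoch k by ring]
  exact dvd_add (dvd_mul_of_dvd_right ((pow_dvd_pow _ (by omega)).trans
    (X_pow_dvd_qPoch_sub_qPoch hk')) _) (dvd_mul_of_dvd_left (X_pow_dvd_qPoch_sub_qPoch hj) _)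

/-- `1 / (Q; Q)_k`, with the usual convention that it vanishes for `k < 0`. -/
noncomputable def qPochInv (k : ℤ) : R⟦X⟧ := if 0 ≤ k then Ring.inverse (qPoch k.toNat) else 0

lemma qPochInv_of_neg {k : ℤ} (hk : k < 0) : qPochInv (R := R) k = 0 := if_neg (by omega)

lemma qPochInv_natCast (j : ℕ) : qPochInv (R := R) j = Ring.inverse (qPoch j) := by
  simp [qPochInv]

lemma qPochInv_zero : qPochInv (R := R) 0 = 1 := by
  simpa [qPoch_zero] using qPochInv_natCast (R := R) 0

lemma qPoch_mul_qPochInv (j : ℕ) : qPoch j * qPochInv (R := R) j = 1 := by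
  rw [qPochInv_natCast, Ring.mul_inverse_cancel _ (isUnit_qPoch j)]

lemma qPochInv_natCast_sub_one (j : ℕ) :
    qPochInv (R := R) ((j : ℤ) - 1) = (1 - X ^ (4 * j)) * qPochInv j := by
  cases j with
  | zero => simp [qPochInv_of_neg]
  | succ i =>
    rw [show ((i + 1 : ℕ) : ℤ) - 1 = i by push_cast; ring, qPochInv_natCast, qPochInv_natCast,
      qPoch_succ, Ring.mul_inverse_rev, ← mul_assoc,
      Ring.mul_inverse_cancel _ (isUnit_one_sub_X_pow (by omega)), one_mul]

lemma qPochInv_natCast_eq_mul_succ (j : ℕ) :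
    qPochInv (R := R) j = (1 - X ^ (4 * (j + 1))) * qPochInv ((j : ℤ) + 1) := by
  simpa using qPochInv_natCast_sub_one (R := R) (j + 1)

def sumExp (m : ℤ) : ℕ := (m * (2 * m + 1)).toNat

lemma sumExp_cast (m : ℤ) : (sumExp m : ℤ) = m * (2 * m + 1) :=
  Int.toNat_of_nonneg (by rcases le_or_gt 0 m with h | h <;> nlinarith)

lemma natAbs_le_sumExp (m : ℤ) : m.natAbs ≤ sumExp m := by
  have h := sumExp_cast m
  have : (m.natAbs : ℤ) ≤ m * (2 * m + 1) := by
    rw [Int.natCast_natAbs]; exact abs_le.2 ⟨by nlinarith [sq_nonneg (2 * m + 1)], by nlinarith⟩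
  omega

lemma sumExp_add_one (m : ℤ) : (sumExp (m + 1) : ℤ) = sumExp m + 4 * m + 3 := by
  rw [sumExp_cast, sumExp_cast]; ring

lemma sumExp_sub_one (m : ℤ) : (sumExp (m - 1) : ℤ) = sumExp m - 4 * m + 1 := by
  rw [sumExp_cast, sumExp_cast]; ring

noncomputable def finiteCoeff (n : ℕ) (m : ℤ) : R⟦X⟧ :=
  X ^ sumExp m * (qPoch (2 * n) * qPochInv (n + m) * qPochInv (n - m))

lemma finiteCoeff_eq_zero {n : ℕ} {m : ℤ} (h : n < m.natAbs) : finiteCoeff (R := R) n m = 0 := by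
  rcases (by omega : (n : ℤ) + m < 0 ∨ (n : ℤ) - m < 0) with h | h <;>
    simp [finiteCoeff, qPochInv_of_neg h]

lemma finiteCoeff_self (n : ℕ) : finiteCoeff (R := R) n n = X ^ sumExp n := by
  rw [finiteCoeff, sub_self, qPochInv_zero, mul_one, ← Nat.cast_add, ← two_mul,
    qPoch_mul_qPochInv, mul_one]

lemma finiteCoeff_neg_self (n : ℕ) : finiteCoeff (R := R) n (-n) = X ^ sumExp (-n) := by
  rw [finiteCoeff, add_neg_cancel, sub_neg_eq_add, qPochInv_zero, mul_one, ← Nat.cast_add,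
    ← two_mul, qPoch_mul_qPochInv, mul_one]

lemma finiteCoeff_succ_of_natAbs_le {n : ℕ} {m : ℤ} (hm : m.natAbs ≤ n) :
    finiteCoeff (R := R) (n + 1) m = (1 + X ^ (8 * n + 4)) * finiteCoeff n m
      + X ^ (4 * n + 3) * finiteCoeff n (m - 1) + X ^ (4 * n + 1) * finiteCoeff n (m + 1) := by
  -- With `a = n + m`, `b = n - m`, every `qPochInv` becomes a multiple of `qPochInv (a + 1)` times
  -- `qPochInv (b + 1)`, and what remains is a polynomial identity in powers of `X`.
  obtain ⟨a, ha⟩ : ∃ a : ℕ, (a : ℤ) = n + m := ⟨(n + m).toNat, by omega⟩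
  obtain ⟨b, hb⟩ : ∃ b : ℕ, (b : ℤ) = n - m := ⟨(n - m).toNat, by omega⟩
  have hup := sumExp_add_one m
  have hdown := sumExp_sub_one m
  simp only [finiteCoeff]
  rw [show ((n + 1 : ℕ) : ℤ) + m = a + 1 by push_cast; omega,
    show ((n + 1 : ℕ) : ℤ) - m = b + 1 by push_cast; omega,
    show (n : ℤ) + m = a by omega, show (n : ℤ) - m = b by omega,
    show (n : ℤ) + (m - 1) = a - 1 by omega, show (n : ℤ) - (m - 1) = b + 1 by omega,
    show (n : ℤ) + (m + 1) = a + 1 by omega, show (n : ℤ) - (m + 1) = b - 1 by omega,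
    qPochInv_natCast_sub_one a, qPochInv_natCast_sub_one b, qPochInv_natCast_eq_mul_succ a,
    qPochInv_natCast_eq_mul_succ b, show 2 * (n + 1) = a + b + 1 + 1 by omega, qPoch_succ,
    qPoch_succ, show 2 * n = a + b by omega]
  simp only [← mul_assoc, ← pow_add]
  rw [show 4 * n + 3 + sumExp (m - 1) = sumExp m + 4 * (b + 1) by omega,
    show 4 * n + 1 + sumExp (m + 1) = sumExp m + 4 * (a + 1) by omega,
    show 8 * n + 4 = 4 * (a + b + 1) by omega]
  ring

theorem finiteCoeff_succ (n : ℕ) (m : ℤ) :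
    finiteCoeff (R := R) (n + 1) m = (1 + X ^ (8 * n + 4)) * finiteCoeff n m
      + X ^ (4 * n + 3) * finiteCoeff n (m - 1) + X ^ (4 * n + 1) * finiteCoeff n (m + 1) := by
  rcases lt_or_ge (n + 1) m.natAbs with hm | hm
  · simp [finiteCoeff_eq_zero, hm, (by omega : n < (m - 1).natAbs), (by omega : n < (m + 1).natAbs),
      (by omega : n < m.natAbs)]
  rcases (by omega : m = -(n + 1 : ℕ) ∨ m = (n + 1 : ℕ) ∨ m.natAbs ≤ n) with rfl | rfl | hm
  · rw [finiteCoeff_neg_self, finiteCoeff_eq_zero (by omega), finiteCoeff_eq_zero (by omega),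
      show -((n + 1 : ℕ) : ℤ) + 1 = -n by push_cast; ring, finiteCoeff_neg_self, ← pow_add]
    simp only [mul_zero, add_zero, zero_add]
    have := sumExp_sub_one (-n)
    rw [show -(n : ℤ) - 1 = -((n + 1 : ℕ) : ℤ) by push_cast; ring] at this
    congr 1
    omega
  · rw [finiteCoeff_self, finiteCoeff_eq_zero (m := (n + 1 : ℕ)) (by omega),
      finiteCoeff_eq_zero (m := (n + 1 : ℕ) + 1) (by omega),
      show ((n + 1 : ℕ) : ℤ) - 1 = n by push_cast; ring, finiteCoeff_self, ← pow_add]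
    simp only [mul_zero, add_zero, zero_add]
    have := sumExp_add_one n
    rw [show (n : ℤ) + 1 = ((n + 1 : ℕ) : ℤ) by push_cast; ring] at this
    congr 1
    omega
  · exact finiteCoeff_succ_of_natAbs_le hm

lemma X_pow_dvd_qPoch_mul_finiteCoeff_sub {N n : ℕ} (h : 2 * N ≤ n) (m : ℤ) :
    (X : R⟦X⟧) ^ N ∣ qPoch n * finiteCoeff n m - X ^ sumExp m := by
  rcases le_or_gt N m.natAbs with hm | hm
  · have hX : (X : R⟦X⟧) ^ N ∣ X ^ sumExp m := pow_dvd_pow _ (hm.trans (natAbs_le_sumExp m))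
    exact dvd_sub (dvd_mul_of_dvd_right (hX.trans (dvd_mul_right _ _)) _) hX
  set j := n - m.natAbs
  set k := n + m.natAbs
  have hinv : qPochInv (n + m) * qPochInv (n - m) = qPochInv (R := R) j * qPochInv k := by
    rcases le_or_gt 0 m with hm0 | hm0
    · rw [show (n : ℤ) + m = k by omega, show (n : ℤ) - m = j by omega, mul_comm]
    · rw [show (n : ℤ) + m = j by omega, show (n : ℤ) - m = k by omega]
  have hfactor : (qPoch n * finiteCoeff n m - X ^ sumExp m : R⟦X⟧) = X ^ sumExp m *
      ((qPoch n * qPoch (2 * n) - qPoch j * qPoch k) * (qPochInv j * qPochInv k)) := by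
    rw [finiteCoeff, mul_assoc (qPoch (2 * n)), hinv]
    linear_combination X ^ sumExp m * qPoch k * qPochInv k * qPoch_mul_qPochInv (R := R) j
      + X ^ sumExp m * qPoch_mul_qPochInv (R := R) k
  rw [hfactor]
  exact dvd_mul_of_dvd_right (dvd_mul_of_dvd_left ((pow_dvd_pow _ (by omega)).trans
    (X_pow_dvd_qPoch_mul_qPoch_sub (by omega) (by omega) (by omega))) _) _

lemma trunc_eq_trunc_of_X_pow_dvd_sub {N : ℕ} {f g : R⟦X⟧} (h : X ^ N ∣ f - g) :
    trunc N f = trunc N g := by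
  ext k
  rw [coeff_trunc, coeff_trunc]
  split_ifs with hk
  · exact sub_eq_zero.1 (by simpa using X_pow_dvd_iff.1 h k hk)
  · rfl

lemma eq_of_forall_trunc_eq {f g : R⟦X⟧} (h : ∀ N, trunc N f = trunc N g) : f = g := by
  ext k
  simpa [coeff_trunc] using congr_arg (Polynomial.coeff · k) (h (k + 1))

lemma sum_Icc_comp_add {M : Type*} [AddCommMonoid M] {f : ℤ → M} {n d : ℕ}
    (hf : ∀ m, n < m.natAbs → f m = 0) {k : ℤ} (hk : k.natAbs ≤ d) :
    ∑ m ∈ Icc (-(n + d : ℤ)) (n + d), f (m + k) = ∑ m ∈ Icc (-(n : ℤ)) n, f m := by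
  have hsupp : Function.support f ⊆ Icc (-(n : ℤ)) n := fun m hm => by
    simp only [coe_Icc, Set.mem_Icc]
    by_contra h
    exact hm (hf m (by omega))
  have hsupp' : Function.support (fun m => f (m + k)) ⊆ Icc (-(n + d : ℤ)) (n + d) := fun m hm => by
    have := hsupp hm
    simp only [coe_Icc, Set.mem_Icc] at this ⊢
    omega
  rw [← finsum_eq_sum_of_support_subset _ hsupp, ← finsum_eq_sum_of_support_subset _ hsupp']
  exact finsum_comp_equiv (Equiv.addRight k)

variable {S : Type*} [CommRing S]

theorem prod_eq_sum_finiteCoeff (n : ℕ) :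
    ∏ i ∈ range n, (1 + PowerSeries.C (T 1 : S[T;T⁻¹]) * X ^ (4 * i + 3))
      * (1 + PowerSeries.C (T (-1)) * X ^ (4 * i + 1))
      = ∑ m ∈ Icc (-(n : ℤ)) n, PowerSeries.C (T m) * finiteCoeff n m := by
  induction n with
  | zero => simpa [sumExp] using (finiteCoeff_self (R := S[T;T⁻¹]) 0).symm
  | succ n ih =>
    have hT : PowerSeries.C (T 1 : S[T;T⁻¹]) * PowerSeries.C (T (-1)) = 1 := by
      rw [← map_mul, ← T_add]; simp
    have shift (a : S[T;T⁻¹]⟦X⟧) {k : ℤ} (hk : k.natAbs ≤ 1) :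
        ∑ m ∈ Icc (-((n + 1 : ℕ) : ℤ)) (n + 1 : ℕ),
            PowerSeries.C (T m) * (a * finiteCoeff n (m + k))
          = ∑ m ∈ Icc (-(n : ℤ)) n, PowerSeries.C (T (m - k)) * (a * finiteCoeff n m) := by
      refine Eq.trans ?_ (sum_Icc_comp_add (d := 1) (f := fun j => PowerSeries.C (T (j - k)) *
        (a * finiteCoeff n j)) (fun j hj => by simp [finiteCoeff_eq_zero hj]) hk)
      simp
    rw [prod_range_succ, ih, sum_mul]
    conv_rhs => simp only [finiteCoeff_succ, mul_add, sum_add_distrib, sub_eq_add_neg]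
    have shift0 := shift (1 + X ^ (8 * n + 4)) (k := 0) (by norm_num)
    simp only [add_zero, sub_zero] at shift0
    rw [shift0, shift _ (k := -1) (by norm_num), shift _ (k := 1) (by norm_num), ← sum_add_distrib,
      ← sum_add_distrib]
    refine sum_congr rfl fun m _ => ?_
    rw [sub_neg_eq_add, T_add, T_sub, map_mul, map_mul]
    linear_combination
      (PowerSeries.C (T m) * finiteCoeff n m * X ^ (4 * n + 3) * X ^ (4 * n + 1)) * hT

theorem prod_eq_sum_qPoch_mul_finiteCoeff (n : ℕ) {s : Finset ℤ} (hs : Icc (-(n : ℤ)) n ⊆ s) :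
    ∏ i ∈ range n, (1 - (X : S[T;T⁻¹]⟦X⟧) ^ (4 * (i + 1)))
      * (1 + PowerSeries.C (T 1) * X ^ (4 * (i + 1) - 1))
      * (1 + PowerSeries.C (T (-1)) * X ^ (4 * (i + 1) - 3))
      = ∑ m ∈ s, PowerSeries.C (T m) * (qPoch n * finiteCoeff n m) := by
  have hexp : ∀ i ∈ range n, (1 + PowerSeries.C (T 1) * X ^ (4 * (i + 1) - 1))
      * (1 + PowerSeries.C (T (-1)) * X ^ (4 * (i + 1) - 3))
      = (1 + PowerSeries.C (T 1 : S[T;T⁻¹]) * X ^ (4 * i + 3))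
        * (1 + PowerSeries.C (T (-1)) * X ^ (4 * i + 1)) := fun i _ => by
    rw [show 4 * (i + 1) - 1 = 4 * i + 3 by omega, show 4 * (i + 1) - 3 = 4 * i + 1 by omega]
  simp only [mul_assoc]
  rw [prod_mul_distrib, prod_congr rfl hexp, prod_eq_sum_finiteCoeff, mul_sum, ← qPoch,
    ← sum_subset hs fun m _ hm => by
      rw [finiteCoeff_eq_zero (by simp at hm; omega), mul_zero, mul_zero]]
  exact sum_congr rfl fun m _ => by ring

end JacobiTripleProduct

open JacobiTripleProduct Finset in
/-- The Jacobi-type triple product identity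
`∏_{i≥1} (1 - q^{2i})(1 + z q^{2i-1/2})(1 + z⁻¹ q^{2i-3/2}) = ∑_{m ∈ ℤ} z^m q^{m(2m+1)/2}`,
written as formal power series in `t = q^{1/2}` (so `q^{a/2} = t^a`) with coefficients in the
Laurent polynomial ring `ℤ[z, z⁻¹]`; here `T m` denotes `z^m`. -/
theorem jacobi_triple_product (P S : PowerSeries (LaurentPolynomial ℤ))
    (hP : PSHasProd (fun i =>
      (1 - (PowerSeries.X : PowerSeries (LaurentPolynomial ℤ)) ^ (4 * (i + 1)))
        * (1 + PowerSeries.C (T 1) * PowerSeries.X ^ (4 * (i + 1) - 1))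
        * (1 + PowerSeries.C (T (-1)) * PowerSeries.X ^ (4 * (i + 1) - 3))) P)
    (hS : PSHasSumZ (fun m =>
      PowerSeries.C (T m) * PowerSeries.X ^ (m * (2 * m + 1)).toNat) S) :
    P = S := by
  refine eq_of_forall_trunc_eq fun N => ?_
  obtain ⟨M, hM⟩ := hP N
  obtain ⟨A, hA⟩ := hS N
  rw [← hM (M + 2 * N) (by omega), ← hA _ subset_union_left,
    prod_eq_sum_qPoch_mul_finiteCoeff _ subset_union_right]
  refine trunc_eq_trunc_of_X_pow_dvd_sub ?_
  rw [← sum_sub_distrib]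
  exact dvd_sum fun m _ => by
    rw [← mul_sub]
    exact dvd_mul_of_dvd_right (X_pow_dvd_qPoch_mul_finiteCoeff_sub (by omega) m) _
end

section
/- As formal power series in q^{1/2}, the character of the irreducible Virasoro module M(1/2, 0) satisfies: ch_q M(1/2, 0) = (1/∏_{i=1}^∞ (1 - q^{2i})) · ∑_{n ∈ ℤ, n even} q^{n² + n/2}, where ch_q M(1/2, 0) is defined combinatorially as ∑_{k≥0} p_D(k) q^k with p_D(k) the number of partitions of k into distinct half-odd-integer parts (parts from {1/2, 3/2, 5/2, ...}) with an even number of parts. -/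
/-!
Put `q = x²`. The finite Jacobi triple product at base `x²` and `z = x` reads
`∏_{j<2n} (1 + x^{2j+1}) = ∑_{|d| ≤ n} [2n, n+d]_{x⁴} x^{2d²+d}`, and
`[2n, n+d]_{x⁴} (x⁴; x⁴)_n ≡ 1` modulo `x^{4(n-|d|+1)}` because `(x⁴; x⁴)_m` stabilises
`x`-adically as `m` grows. Hence `(x⁴; x⁴)_n ∏_{j<2n} (1 + x^{2j+1}) ≡ ∑_d x^{2d²+d}` in degrees
`≤ 2n`. The even part of the left side is `(q²; q²)_n ch_q M(1/2, 0)` in low degrees, while on the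
right only even `d` contribute, with `2d² + d = 2(d² + d/2)`. Letting `n → ∞` gives the theorem.
-/

open PowerSeries

open Finset

section QBinomial

variable {R : Type*} [CommRing R] (q : R)

def qPochhammer (m : ℕ) : R := ∏ i ∈ range m, (1 - q ^ (i + 1))

/-- The Gaussian binomial coefficient `[m, k]_q`, extended by zero to all `k : ℤ` so that the
Pascal rules below need no boundary cases. -/
def qBinomial : ℕ → ℤ → R
  | 0, k => if k = 0 then 1 else 0
  | m + 1, k => qBinomial m k + q ^ (m + 1 - k).toNat * qBinomial m (k - 1)

theorem qPochhammer_succ (m : ℕ) : qPochhammer q (m + 1) = qPochhammer q m * (1 - q ^ (m + 1)) :=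
  prod_range_succ _ _

theorem map_qPochhammer {S F : Type*} [CommRing S] [FunLike F R S] [RingHomClass F R S] (f : F)
    (m : ℕ) : f (qPochhammer q m) = qPochhammer (f q) m := by
  simp [qPochhammer]

theorem qBinomial_of_neg (m : ℕ) {k : ℤ} (hk : k < 0) : qBinomial q m k = 0 := by
  induction m generalizing k with
  | zero => simp [qBinomial, hk.ne]
  | succ m ih => simp [qBinomial, ih hk, ih (show k - 1 < 0 by omega)]

theorem qBinomial_of_lt {m : ℕ} {k : ℤ} (hk : (m : ℤ) < k) : qBinomial q m k = 0 := by
  induction m generalizing k with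
  | zero => simp only [qBinomial, ite_eq_right_iff]; omega
  | succ m ih =>
    simp [qBinomial, ih (show (m : ℤ) < k by omega), ih (show (m : ℤ) < k - 1 by omega)]

theorem qBinomial_zero_right (m : ℕ) : qBinomial q m 0 = 1 := by
  induction m with
  | zero => simp [qBinomial]
  | succ m ih => simp [qBinomial, ih, qBinomial_of_neg q m (show (-1 : ℤ) < 0 by omega)]

theorem qBinomial_self (m : ℕ) : qBinomial q m m = 1 := by
  induction m with
  | zero => simp [qBinomial]
  | succ m ih => simp [qBinomial, ih, qBinomial_of_lt q (show (m : ℤ) < m + 1 by omega)]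

theorem qBinomial_succ' (m : ℕ) (k : ℤ) :
    qBinomial q (m + 1) k = q ^ k.toNat * qBinomial q m k + qBinomial q m (k - 1) := by
  induction m generalizing k with
  | zero =>
    rcases lt_trichotomy k 0 with hk | rfl | hk
    · simp [qBinomial, hk.ne, (show k - 1 ≠ 0 by omega)]
    · simp [qBinomial]
    · rcases eq_or_ne k 1 with rfl | hk1
      · simp [qBinomial]
      · simp [qBinomial, hk.ne', sub_ne_zero.mpr hk1]
  | succ m ih =>
    conv_lhs => rw [qBinomial, ih k, ih (k - 1)]
    conv_rhs => rw [qBinomial, qBinomial]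
    have hshift : q ^ (↑(m + 1) + 1 - k).toNat = q ^ (↑m + 1 - (k - 1)).toNat := by
      congr 1; omega
    by_cases hk : 1 ≤ k ∧ k ≤ m + 1
    · have hexp : q ^ (↑(m + 1) + 1 - k).toNat * q ^ (k - 1).toNat =
          q ^ k.toNat * q ^ (↑m + 1 - k).toNat := by
        rw [← pow_add, ← pow_add]; congr 1; omega
      linear_combination qBinomial q m (k - 1) * hexp + qBinomial q m (k - 1 - 1) * hshift
    · have h0 : qBinomial q m (k - 1) = 0 := by
        rcases not_and_or.mp hk with h | h
        · exact qBinomial_of_neg q m (by omega)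
        · exact qBinomial_of_lt q (by omega)
      rw [h0]
      linear_combination qBinomial q m (k - 1 - 1) * hshift

theorem qBinomial_add_two (m : ℕ) (k : ℤ) :
    qBinomial q (m + 2) k = q ^ k.toNat * qBinomial q m k +
      (1 + q ^ (m + 1)) * qBinomial q m (k - 1) +
      q ^ (m + 2 - k).toNat * qBinomial q m (k - 2) := by
  rw [qBinomial_succ', qBinomial, qBinomial, show k - 1 - 1 = k - 2 by ring,
    show (↑m + 1 - (k - 1)).toNat = (↑m + 2 - k).toNat by omega]
  by_cases hk : 1 ≤ k ∧ k ≤ m + 1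
  · have hexp : q ^ k.toNat * q ^ (↑m + 1 - k).toNat = q ^ (m + 1) := by
      rw [← pow_add]; congr 1; omega
    linear_combination qBinomial q m (k - 1) * hexp
  · have h0 : qBinomial q m (k - 1) = 0 := by
      rcases not_and_or.mp hk with h | h
      · exact qBinomial_of_neg q m (by omega)
      · exact qBinomial_of_lt q (by omega)
    rw [h0]
    ring

theorem qBinomial_mul_qPochhammer {m k : ℕ} (hkm : k ≤ m) :
    qBinomial q m k * qPochhammer q k * qPochhammer q (m - k) = qPochhammer q m := by
  induction m generalizing k with
  | zero => simp [Nat.le_zero.mp hkm, qBinomial, qPochhammer]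
  | succ m ih =>
    rcases k with _ | k
    · simp [qBinomial_zero_right, qPochhammer]
    rcases hkm.eq_or_lt with heq | hlt
    · obtain rfl : k = m := by omega
      rw [Nat.sub_self, qBinomial_self]
      simp [qPochhammer]
    obtain ⟨a, rfl⟩ := Nat.exists_eq_add_of_lt (Nat.succ_lt_succ_iff.mp hlt)
    have hpascal : qBinomial q (k + a + 1 + 1) ↑(k + 1) =
        qBinomial q (k + a + 1) ↑(k + 1) + q ^ (a + 1) * qBinomial q (k + a + 1) k := by
      rw [qBinomial]; push_cast; congr 3 <;> [omega; ring]
    have ih₁ := ih (k := k + 1) (by omega)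
    have ih₂ := ih (k := k) (by omega)
    rw [show k + a + 1 - (k + 1) = a by omega] at ih₁
    rw [show k + a + 1 - k = a + 1 by omega, qPochhammer_succ q a] at ih₂
    rw [qPochhammer_succ q k] at ih₁
    rw [hpascal, show k + a + 1 + 1 - (k + 1) = a + 1 by omega, qPochhammer_succ, qPochhammer_succ,
      qPochhammer_succ q (k + a + 1)]
    have hexp : q ^ (a + 1) * q ^ (k + 1) = q ^ (k + a + 1 + 1) := by rw [← pow_add]; congr 1; omega
    linear_combination (1 - q ^ (a + 1)) * ih₁ + q ^ (a + 1) * (1 - q ^ (k + 1)) * ih₂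
      - qPochhammer q (k + a + 1) * hexp

theorem pow_dvd_qPochhammer_sub {j m : ℕ} (h : j ≤ m) :
    q ^ (j + 1) ∣ qPochhammer q m - qPochhammer q j := by
  induction m, h using Nat.le_induction with
  | base => simp
  | succ m hjm ih =>
    rw [qPochhammer_succ, show qPochhammer q m * (1 - q ^ (m + 1)) - qPochhammer q j =
      (qPochhammer q m - qPochhammer q j) - qPochhammer q m * q ^ (m + 1) by ring]
    exact dvd_sub ih (Dvd.dvd.mul_left (pow_dvd_pow q (by omega)) _)

theorem pow_dvd_qBinomial_mul_qPochhammer_sub_one {m k j l : ℕ} (hjk : j ≤ k) (hjmk : j + k ≤ m)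
    (hjl : j ≤ l) (hunit : IsUnit (qPochhammer q j)) :
    q ^ (j + 1) ∣ qBinomial q m k * qPochhammer q l - 1 := by
  let π := Ideal.Quotient.mk (Ideal.span {q ^ (j + 1)})
  have hπ : ∀ {i}, j ≤ i → π (qPochhammer q i) = π (qPochhammer q j) := fun hi =>
    Ideal.Quotient.eq.mpr (Ideal.mem_span_singleton.mpr (pow_dvd_qPochhammer_sub q hi))
  have key := congrArg π (qBinomial_mul_qPochhammer q (show k ≤ m by omega))
  simp only [map_mul, hπ hjk, hπ (show j ≤ m - k by omega), hπ (show j ≤ m by omega)] at key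
  rw [← Ideal.mem_span_singleton, ← Ideal.Quotient.eq_zero_iff_mem, map_sub, map_mul, map_one,
    hπ hjl, sub_eq_zero]
  exact (hunit.map π).mul_right_cancel (by linear_combination key)

theorem sum_range_mul_qBinomial_sub {m s N : ℕ} (h : s + m + 1 ≤ N) (f : ℕ → R) :
    ∑ k ∈ range N, f k * qBinomial q m ((k : ℤ) - s) =
      ∑ k ∈ range (m + 1), f (s + k) * qBinomial q m k := by
  obtain ⟨r, rfl⟩ := Nat.exists_eq_add_of_le h
  have hlow : ∑ k ∈ range s, f k * qBinomial q m ((k : ℤ) - s) = 0 :=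
    sum_eq_zero fun k hk => by
      rw [qBinomial_of_neg q m (by simp only [mem_range] at hk; omega), mul_zero]
  have hhigh :
      ∑ k ∈ range r, f (s + (m + 1) + k) * qBinomial q m ((s + (m + 1) + k : ℕ) - s) = 0 :=
    sum_eq_zero fun k _ => by rw [qBinomial_of_lt q (by push_cast; omega), mul_zero]
  rw [show s + m + 1 + r = s + (m + 1) + r by ring, sum_range_add, sum_range_add, hlow, hhigh]
  simp

end QBinomial

section TripleProduct

variable {R : Type*} [CommRing R]

theorem jacobi_triple_product_finite (q z : R) (n : ℕ) :
    ∏ i ∈ range n, (1 + z * q ^ (2 * i + 1)) * (z + q ^ (2 * i + 1)) =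
      ∑ k ∈ range (2 * n + 1),
        qBinomial (q ^ 2) (2 * n) k * z ^ k * q ^ ((k : ℤ) - n).natAbs ^ 2 := by
  induction n with
  | zero => simp [qBinomial]
  | succ n ih =>
    let t : ℕ → R := fun k => z ^ k * q ^ ((k : ℤ) - (n + 1 : ℕ)).natAbs ^ 2
    -- lower indices written as `k - s` with `s : ℕ`, as `sum_range_mul_qBinomial_sub` expects
    have hsplit : ∑ k ∈ range (2 * (n + 1) + 1),
        qBinomial (q ^ 2) (2 * (n + 1)) k * z ^ k * q ^ ((k : ℤ) - (n + 1 : ℕ)).natAbs ^ 2 =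
        ∑ k ∈ range (2 * n + 3),
          (q ^ (2 * k) * t k) * qBinomial (q ^ 2) (2 * n) ((k : ℤ) - (0 : ℕ)) +
        ∑ k ∈ range (2 * n + 3),
          ((1 + q ^ (4 * n + 2)) * t k) * qBinomial (q ^ 2) (2 * n) ((k : ℤ) - (1 : ℕ)) +
        ∑ k ∈ range (2 * n + 3), (q ^ (2 * (2 * n + 2 - k)) * t k) *
          qBinomial (q ^ 2) (2 * n) ((k : ℤ) - (2 : ℕ)) := by
      rw [← sum_add_distrib, ← sum_add_distrib]
      refine sum_congr rfl fun k hk => ?_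
      rw [show 2 * (n + 1) = 2 * n + 2 by ring, qBinomial_add_two,
        show ((2 * n : ℕ) + 2 - (k : ℤ)).toNat = 2 * n + 2 - k by omega]
      simp only [t, Int.toNat_natCast, ← pow_mul]
      push_cast [sub_zero]
      ring
    rw [prod_range_succ, ih, hsplit, sum_range_mul_qBinomial_sub _ (by omega),
      sum_range_mul_qBinomial_sub _ (by omega), sum_range_mul_qBinomial_sub _ (by omega),
      ← sum_add_distrib, ← sum_add_distrib, sum_mul]
    refine sum_congr rfl fun k hk' => ?_
    have hk : k ≤ 2 * n := Nat.lt_succ_iff.mp (mem_range.mp hk')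
    have h₀ : q ^ (2 * k) * q ^ ((k : ℤ) - (n + 1 : ℕ)).natAbs ^ 2 =
        q ^ (2 * n + 1) * q ^ ((k : ℤ) - n).natAbs ^ 2 := by
      rw [← pow_add, ← pow_add]; congr 1; zify; simp only [sq_abs]; ring
    have h₁ : ((1 + k : ℕ) : ℤ) - (n + 1 : ℕ) = k - n := by push_cast; ring
    have h₂ : q ^ (2 * (2 * n + 2 - (2 + k))) * q ^ (((2 + k : ℕ) : ℤ) - (n + 1 : ℕ)).natAbs ^ 2 =
        q ^ (2 * n + 1) * q ^ ((k : ℤ) - n).natAbs ^ 2 := by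
      rw [← pow_add, ← pow_add]; congr 1
      zify [show 2 + k ≤ 2 * n + 2 by omega]; simp only [sq_abs]; ring
    simp only [t, h₁, zero_add]
    linear_combination -(z ^ k * qBinomial (q ^ 2) (2 * n) k) * h₀ -
      (z ^ (2 + k) * qBinomial (q ^ 2) (2 * n) k) * h₂

end TripleProduct

section PowerSeries

variable {R : Type*} [CommRing R]

theorem coeff_prod_one_add_X_pow {ι : Type*} (s : Finset ι) (w : ι → ℕ) (n : ℕ) :
    coeff n (∏ i ∈ s, (1 + X ^ w i) : R⟦X⟧) = #{t ∈ s.powerset | ∑ i ∈ t, w i = n} := by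
  simp only [prod_one_add, prod_pow_eq_pow_sum, map_sum, coeff_X_pow, eq_comm (a := n)]
  rw [sum_boole]

theorem coeff_eq_of_trunc_eq {f g : R⟦X⟧} {N d : ℕ} (h : trunc N f = trunc N g) (hd : d < N) :
    coeff d f = coeff d g := by
  rw [← coeff_coe_trunc_of_lt hd, h, coeff_coe_trunc_of_lt hd]

theorem coeff_eq_of_X_pow_dvd_sub {f g : R⟦X⟧} {N d : ℕ} (h : X ^ N ∣ f - g) (hd : d < N) :
    coeff d f = coeff d g := by
  rw [← sub_eq_zero, ← map_sub]
  exact X_pow_dvd_iff.mp h d hd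

theorem coeff_expand_mul_eq_of_coeff_eq (p : ℕ) (hp : p ≠ 0) (f : R⟦X⟧) {g h : R⟦X⟧} {K : ℕ}
    (hgh : ∀ j ≤ K, coeff (p * j) g = coeff (p * j) h) :
    coeff (p * K) (expand p hp f * g) = coeff (p * K) (expand p hp f * h) := by
  simp only [coeff_mul]
  refine sum_congr rfl fun ij hij => ?_
  rw [HasAntidiagonal.mem_antidiagonal] at hij
  by_cases hdvd : p ∣ ij.1
  · obtain ⟨i, hi⟩ := hdvd
    obtain ⟨j, hj⟩ : p ∣ ij.2 := (Nat.dvd_add_right ⟨i, hi⟩).mp (hij ▸ dvd_mul_right p K)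
    have hjK : j ≤ K := by
      have : p * j ≤ p * K := by omega
      exact Nat.le_of_mul_le_mul_left this (Nat.pos_of_ne_zero hp)
    rw [hj, hgh j hjK]
  · rw [coeff_expand_of_not_dvd p hp f hdvd, zero_mul, zero_mul]

theorem qPochhammer_X_pow (d m : ℕ) :
    qPochhammer (X ^ d : R⟦X⟧) m = ∏ i ∈ range m, (1 - X ^ (d * (i + 1))) := by
  simp [qPochhammer, pow_mul]

theorem constantCoeff_qPochhammer_X_pow {d : ℕ} (hd : d ≠ 0) (m : ℕ) :
    constantCoeff (qPochhammer (X ^ d : R⟦X⟧) m) = 1 := by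
  simp [qPochhammer, hd]

theorem isUnit_qPochhammer_X_pow {d : ℕ} (hd : d ≠ 0) (m : ℕ) :
    IsUnit (qPochhammer (X ^ d : R⟦X⟧) m) :=
  isUnit_iff_constantCoeff.mpr (by rw [constantCoeff_qPochhammer_X_pow hd]; exact isUnit_one)

theorem expand_qPochhammer_X_pow (p : ℕ) (hp : p ≠ 0) (d m : ℕ) :
    expand p hp (qPochhammer (X ^ d : R⟦X⟧) m) = qPochhammer (X ^ (d * p)) m := by
  rw [map_qPochhammer, map_pow, expand_X, ← pow_mul, mul_comm]

end PowerSeries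

section Theta

variable {R : Type*} [CommRing R]

theorem two_mul_sq_add_self_nonneg (d : ℤ) : 0 ≤ 2 * d ^ 2 + d := by
  nlinarith [sq_nonneg (2 * d + 1)]

theorem abs_le_of_two_mul_sq_add_self_eq {d : ℤ} {K : ℕ} (h : 2 * d ^ 2 + d = 2 * K) : |d| ≤ K := by
  cases abs_cases d <;> nlinarith

noncomputable def distinctOddProd (N : ℕ) : R⟦X⟧ := ∏ j ∈ range N, (1 + X ^ (2 * j + 1))

theorem even_card_of_sum_two_mul_add_one_eq {A : Finset ℕ} {k : ℕ}
    (h : ∑ j ∈ A, (2 * j + 1) = 2 * k) : Even #A := by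
  rw [sum_add_distrib, ← mul_sum, sum_const, smul_eq_mul, mul_one] at h
  exact ⟨k - ∑ j ∈ A, j, by omega⟩

theorem coeff_two_mul_distinctOddProd {N k : ℕ} (hk : k ≤ N) :
    coeff (2 * k) (distinctOddProd N : R⟦X⟧) =
      Nat.card {A : Finset ℕ | ∑ j ∈ A, (2 * j + 1) = 2 * k ∧ Even #A} := by
  have hset : {A : Finset ℕ | ∑ j ∈ A, (2 * j + 1) = 2 * k ∧ Even #A} =
      ↑{A ∈ (range N).powerset | ∑ j ∈ A, (2 * j + 1) = 2 * k} := by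
    ext A
    simp only [Set.mem_ofPred_eq, coe_filter, mem_powerset]
    refine ⟨fun ⟨hsum, _⟩ => ⟨fun j hj => ?_, hsum⟩,
      fun ⟨_, hsum⟩ => ⟨hsum, even_card_of_sum_two_mul_add_one_eq hsum⟩⟩
    have := single_le_sum (f := fun j => 2 * j + 1) (fun _ _ => Nat.zero_le _) hj
    rw [mem_range]
    omega
  rw [distinctOddProd, coeff_prod_one_add_X_pow, hset, Nat.card_coe_set_eq, Set.ncard_coe_finset]

theorem X_pow_mul_distinctOddProd (n : ℕ) :
    (X ^ n * distinctOddProd (2 * n) : R⟦X⟧) =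
      ∏ i ∈ range n, (1 + X * (X ^ 2) ^ (2 * i + 1)) * (X + (X ^ 2) ^ (2 * i + 1)) := by
  induction n with
  | zero => simp [distinctOddProd]
  | succ n ih =>
    rw [prod_range_succ, ← ih, distinctOddProd, show 2 * (n + 1) = 2 * n + 1 + 1 by ring,
      prod_range_succ, prod_range_succ, ← distinctOddProd]
    ring

theorem distinctOddProd_two_mul (n : ℕ) :
    (distinctOddProd (2 * n) : R⟦X⟧) =
      ∑ d ∈ Icc (-n : ℤ) n, qBinomial (X ^ 4) (2 * n) (n + d) * X ^ (2 * d ^ 2 + d).toNat := by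
  apply X_pow_mul_cancel (k := n)
  rw [X_pow_mul_distinctOddProd, jacobi_triple_product_finite, mul_sum]
  refine sum_nbij' (fun k => (k : ℤ) - n) (fun d => (n + d).toNat) ?_ ?_ ?_ ?_ ?_
  · intro k hk; simp only [mem_range, mem_Icc] at hk ⊢; omega
  · intro d hd; simp only [mem_range, mem_Icc] at hd ⊢; omega
  · intro k _; simp
  · intro d hd; simp only [mem_Icc] at hd; simp only [Int.ofNat_toNat]; omega
  · intro k _
    have hexp : k + 2 * ((k : ℤ) - n).natAbs ^ 2 =
        n + (2 * ((k : ℤ) - n) ^ 2 + ((k : ℤ) - n)).toNat := by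
      have := two_mul_sq_add_self_nonneg ((k : ℤ) - n)
      zify; rw [Int.toNat_of_nonneg this, sq_abs]; ring
    rw [← pow_mul, ← pow_mul, add_sub_cancel, ← mul_assoc, mul_assoc _ (X ^ k), ← pow_add, hexp,
      pow_add]
    ring

theorem X_pow_dvd_qPochhammer_mul_distinctOddProd_sub {K n : ℕ} (hKn : K ≤ n) :
    (X : R⟦X⟧) ^ (2 * K + 1) ∣ qPochhammer (X ^ 4) n * distinctOddProd (2 * n) -
      ∑ d ∈ Icc (-n : ℤ) n, X ^ (2 * d ^ 2 + d).toNat := by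
  rw [distinctOddProd_two_mul, mul_sum, ← sum_sub_distrib]
  refine dvd_sum fun d hd => ?_
  obtain ⟨hd₁, hd₂⟩ := mem_Icc.mp hd
  have hdvd := pow_dvd_qBinomial_mul_qPochhammer_sub_one (X ^ 4 : R⟦X⟧) (m := 2 * n)
    (k := (n + d).toNat) (j := n - d.natAbs) (l := n) (by omega) (by omega) (by omega)
    (isUnit_qPochhammer_X_pow (by norm_num) _)
  rw [Int.toNat_of_nonneg (by omega)] at hdvd
  have hle : 2 * K + 1 ≤ 4 * (n - d.natAbs + 1) + (2 * d ^ 2 + d).toNat := by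
    have := two_mul_sq_add_self_nonneg d
    zify [show d.natAbs ≤ n by omega]
    rw [Int.toNat_of_nonneg this, ← sq_abs d]
    nlinarith [abs_nonneg d, neg_abs_le d, sq_nonneg (|d| - 1)]
  have hfactor : qPochhammer (X ^ 4 : R⟦X⟧) n *
      (qBinomial (X ^ 4) (2 * n) (n + d) * X ^ (2 * d ^ 2 + d).toNat) - X ^ (2 * d ^ 2 + d).toNat
      = (qBinomial (X ^ 4) (2 * n) (n + d) * qPochhammer (X ^ 4) n - 1) *
        X ^ (2 * d ^ 2 + d).toNat := by ring
  rw [hfactor]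
  rw [← pow_mul] at hdvd
  exact (pow_dvd_pow X hle).trans (pow_add (X : R⟦X⟧) _ _ ▸ mul_dvd_mul_right hdvd _)

noncomputable def thetaTerm (n : ℤ) : R⟦X⟧ := if Even n then X ^ (n ^ 2 + n / 2).toNat else 0

theorem even_and_toNat_eq_iff (d : ℤ) (K : ℕ) :
    Even d ∧ (d ^ 2 + d / 2).toNat = K ↔ 2 * d ^ 2 + d = 2 * K := by
  constructor
  · rintro ⟨⟨m, rfl⟩, rfl⟩
    rw [show (m + m) / 2 = m by omega, Int.toNat_of_nonneg (by nlinarith)]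
    ring
  · intro h
    obtain ⟨m, rfl⟩ : Even d := ⟨K - d ^ 2, by linarith⟩
    refine ⟨⟨m, rfl⟩, ?_⟩
    have hm : (m + m) / 2 = m := by omega
    rw [hm, show (m + m) ^ 2 + m = K by linarith]
    simp

theorem coeff_thetaTerm (K : ℕ) (d : ℤ) :
    coeff K (thetaTerm d : R⟦X⟧) = if 2 * d ^ 2 + d = 2 * K then 1 else 0 := by
  by_cases hd : Even d
  · rw [thetaTerm, if_pos hd, coeff_X_pow]
    exact if_congr (by rw [← even_and_toNat_eq_iff]; simp [hd, eq_comm]) rfl rfl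
  · rw [thetaTerm, if_neg hd, map_zero, if_neg fun h => hd ((even_and_toNat_eq_iff d K).mpr h).1]

theorem coeff_two_mul_X_pow_two_mul_sq_add_self (K : ℕ) (d : ℤ) :
    coeff (2 * K) (X ^ (2 * d ^ 2 + d).toNat : R⟦X⟧) = if 2 * d ^ 2 + d = 2 * K then 1 else 0 := by
  have := two_mul_sq_add_self_nonneg d
  rw [coeff_X_pow]
  exact if_congr (by omega) rfl rfl

theorem coeff_sum_thetaTerm_of_subset (K : ℕ) {B : Finset ℤ} (hsum₁ : Icc (-K : ℤ) K ⊆ B) :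
    coeff K (∑ d ∈ B, thetaTerm d : R⟦X⟧) = coeff K (∑ d ∈ Icc (-K : ℤ) K, thetaTerm d) := by
  simp only [map_sum]
  refine (sum_subset hsum₁ fun d _ hd => ?_).symm
  rw [coeff_thetaTerm, if_neg]
  intro h
  exact hd (mem_Icc.mpr (abs_le.mp (abs_le_of_two_mul_sq_add_self_eq h)))

end Theta

section Character

variable {R : Type*} [CommRing R]

noncomputable def fermionCharacter : R⟦X⟧ :=
  mk fun k => (Nat.card {A : Finset ℕ | ∑ j ∈ A, (2 * j + 1) = 2 * k ∧ Even A.card} : R)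

theorem coeff_qPochhammer_mul_fermionCharacter {K n : ℕ} (hKn : K ≤ n) :
    coeff K (qPochhammer (X ^ 2) n * fermionCharacter : R⟦X⟧) =
      coeff K (∑ d ∈ Icc (-K : ℤ) K, thetaTerm d) := by
  have hcoeff : ∀ j ≤ K, coeff (2 * j) (expand 2 two_ne_zero (fermionCharacter : R⟦X⟧)) =
      coeff (2 * j) (distinctOddProd (2 * n)) := fun j hj => by
    rw [coeff_expand_mul, coeff_two_mul_distinctOddProd (by omega), fermionCharacter, coeff_mk]
  calc coeff K (qPochhammer (X ^ 2) n * fermionCharacter : R⟦X⟧)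
      = coeff (2 * K) (expand 2 two_ne_zero (qPochhammer (X ^ 2) n) *
          expand 2 two_ne_zero fermionCharacter) := by rw [← map_mul, coeff_expand_mul]
    _ = coeff (2 * K) (qPochhammer (X ^ 4) n * distinctOddProd (2 * n)) := by
      rw [coeff_expand_mul_eq_of_coeff_eq 2 two_ne_zero _ hcoeff, expand_qPochhammer_X_pow]
    _ = coeff (2 * K) (∑ d ∈ Icc (-n : ℤ) n, X ^ (2 * d ^ 2 + d).toNat) :=
      coeff_eq_of_X_pow_dvd_sub (X_pow_dvd_qPochhammer_mul_distinctOddProd_sub hKn) (by omega)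
    _ = coeff K (∑ d ∈ Icc (-n : ℤ) n, thetaTerm d) := by
      simp only [map_sum, coeff_thetaTerm, coeff_two_mul_X_pow_two_mul_sq_add_self]
    _ = coeff K (∑ d ∈ Icc (-K : ℤ) K, thetaTerm d) :=
      coeff_sum_thetaTerm_of_subset K (Icc_subset_Icc (by omega) (by omega))

end Character

/-- The character of `M(1/2, 0)`: the generating series `∑_k p_D(k) q^k`, where `p_D(k)` is the
number of partitions of `k` into distinct half-odd-integer parts (a part `(2j+1)/2` is encoded by
`j : ℕ`, and the sum condition `∑ (2j+1)/2 = k` reads `∑ (2j+1) = 2k`) with an even number of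
parts, equals `(1/∏_{i≥1}(1 - q^{2i})) · ∑_{n even} q^{n² + n/2}`. -/
theorem character_M_half_zero (P S : PowerSeries ℚ)
    (hP : PSHasProd (fun i => 1 - (PowerSeries.X : PowerSeries ℚ) ^ (2 * (i + 1))) P)
    (hS : PSHasSumZ (fun n => if Even n then
      (PowerSeries.X : PowerSeries ℚ) ^ (n ^ 2 + n / 2).toNat else 0) S) :
    PowerSeries.mk (fun k =>
        (Nat.card {A : Finset ℕ | ∑ j ∈ A, (2 * j + 1) = 2 * k ∧ Even A.card} : ℚ))
      = P⁻¹ * S := by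
  have hS' : PSHasSumZ thetaTerm S := hS
  have hPS : P * fermionCharacter = S := by
    ext K
    obtain ⟨M, hM⟩ := hP (K + 1)
    obtain ⟨A, hA⟩ := hS' (K + 1)
    have hQ := hM (max M K) (le_max_left _ _)
    simp only [← qPochhammer_X_pow] at hQ
    calc coeff K (P * fermionCharacter)
        = coeff K (qPochhammer (X ^ 2) (max M K) * fermionCharacter) :=
          coeff_eq_of_trunc_eq (by rw [← trunc_trunc_mul, ← hQ, trunc_trunc_mul]) K.lt_succ_self
      _ = coeff K (∑ d ∈ Icc (-K : ℤ) K, thetaTerm d) :=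
          coeff_qPochhammer_mul_fermionCharacter (le_max_right _ _)
      _ = coeff K (∑ d ∈ A ∪ Icc (-K : ℤ) K, thetaTerm d) :=
          (coeff_sum_thetaTerm_of_subset K subset_union_right).symm
      _ = coeff K S := coeff_eq_of_trunc_eq (hA _ subset_union_left) K.lt_succ_self
  have hP₀ : constantCoeff P ≠ 0 := by
    obtain ⟨M, hM⟩ := hP 1
    have hQ := hM M le_rfl
    simp only [← qPochhammer_X_pow] at hQ
    rw [← coeff_zero_eq_constantCoeff_apply, ← coeff_eq_of_trunc_eq hQ zero_lt_one,
      coeff_zero_eq_constantCoeff_apply, constantCoeff_qPochhammer_X_pow two_ne_zero]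
    exact one_ne_zero
  change fermionCharacter = P⁻¹ * S
  rw [← hPS, ← mul_assoc, PowerSeries.inv_mul_cancel _ hP₀, one_mul]
end

section
/- In the Clifford algebra generated by elements φ_m (m ∈ ℤ + 1/2) with relations φ_m φ_n + φ_n φ_m = δ_{m,-n}·1, the elements h_n defined as the modes of h(z) = (1/2):φ(z)φ(-z): satisfy the Heisenberg commutation relations [h_m, h_n] = m δ_{m+n,0}·1, acting on the Fock space representation with vacuum |0⟩ annihilated by φ_n for n > 0. Concretely, h_n = (1/2)∑_{k ∈ ℤ+1/2} (-1)^{k+1/2} :φ_{-k} φ_{k+2n}: (with appropriate normal ordering), and these operators on the Fock space satisfy [h_m, h_n] = m δ_{m+n,0}. -/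
/-!
Normal ordering changes `φ_a φ_b` only by a scalar, so commutators with `h_n` may be computed
with plain products, and the anticommutation relations give `[h_m, φ_k] = (-1)^k φ_{k+2m}`
(indices shifted by `1/2`). By the Leibniz rule, `[h_m, h_n]` is then the locally finite sum
of `(X_{j-2m} - X_j) / 2` with `X_j = φ_{-j-1/2} φ_{j+1/2+2(m+n)}`. On a vector `v`, `X_j v`
vanishes for `j ≫ 0` and equals `δ_{m+n,0} v` for `j ≪ 0`, so the shifted sum telescopes to
`2m δ_{m+n,0} v`.
-/

open Finset

section Telescoping

variable {V : Type*} [AddCommGroup V]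

theorem sum_Ico_eq_zsmul_add_sum_Ico {g : ℤ → V} {w : V} {R a b : ℤ} (hR : 0 ≤ R)
    (hw : ∀ j < -R, g j = w) (h0 : ∀ j, R ≤ j → g j = 0) (ha : a ≤ -R) (hb : R ≤ b) :
    ∑ j ∈ Ico a b, g j = (-R - a) • w + ∑ j ∈ Ico (-R) R, g j := by
  have hsplit {x y z : ℤ} (hxy : x ≤ y) (hyz : y ≤ z) :
      ∑ j ∈ Ico x z, g j = ∑ j ∈ Ico x y, g j + ∑ j ∈ Ico y z, g j := by
    rw [← Ico_union_Ico_eq_Ico hxy hyz, sum_union (Ico_disjoint_Ico_consecutive _ _ _)]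
  rw [hsplit ha (by omega), hsplit (by omega : -R ≤ R) hb,
    sum_congr rfl fun j hj => hw j (mem_Ico.1 hj).2,
    sum_congr rfl fun j hj => h0 j (mem_Ico.1 hj).1, sum_const_zero, add_zero, sum_const,
    Int.card_Ico, ← natCast_zsmul, Int.toNat_of_nonneg (by omega)]

theorem sum_Ico_sub_shift_eq_zsmul {g : ℤ → V} {w : V} {R : ℤ} (hR : 0 ≤ R)
    (hw : ∀ j < -R, g j = w) (h0 : ∀ j, R ≤ j → g j = 0) {a b : ℤ} (d : ℤ)
    (ha : a ≤ -R - |d|) (hb : R + |d| ≤ b) :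
    ∑ j ∈ Ico a b, (g (j - d) - g j) = d • w := by
  have hshift : ∑ j ∈ Ico a b, g (j - d) = ∑ j ∈ Ico (a - d) (b - d), g j := by
    simp only [sub_eq_add_neg]
    exact sum_Ico_add' g a b (-d)
  have hd := abs_le.1 (le_refl |d|)
  rw [sum_sub_distrib, hshift,
    sum_Ico_eq_zsmul_add_sum_Ico (a := a - d) hR hw h0 (by omega) (by omega),
    sum_Ico_eq_zsmul_add_sum_Ico (a := a) hR hw h0 (by omega) (by omega), add_sub_add_right_eq_sub,
    ← sub_smul]
  congr 1
  ring

end Telescoping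

section LocallyFiniteSum

variable {ι R V : Type*} [Semiring R] [AddCommGroup V] [Module R V]

def HasLocallyFiniteSum (f : ι → Module.End R V) (T : Module.End R V) : Prop :=
  ∀ v, ∃ A : Finset ι, ∀ B, A ⊆ B → T v = ∑ j ∈ B, f j v

namespace HasLocallyFiniteSum

variable [DecidableEq ι] {f : ι → Module.End R V} {T : Module.End R V}

theorem lie_right (hT : HasLocallyFiniteSum f T) (S : Module.End R V) :
    HasLocallyFiniteSum (fun j => ⁅S, f j⁆) ⁅S, T⁆ := by
  intro v
  obtain ⟨A₁, h₁⟩ := hT v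
  obtain ⟨A₂, h₂⟩ := hT (S v)
  refine ⟨A₁ ∪ A₂, fun B hB => ?_⟩
  simp only [Ring.lie_def, LinearMap.sub_apply, Module.End.mul_apply,
    h₁ B (subset_union_left.trans hB), h₂ B (subset_union_right.trans hB), map_sum,
    sum_sub_distrib]

theorem eq_sum_of_support_subset (hT : HasLocallyFiniteSum f T) {C : Finset ι}
    (hC : ∀ j ∉ C, f j = 0) : T = ∑ j ∈ C, f j := by
  ext v
  obtain ⟨A, hA⟩ := hT v
  rw [hA (A ∪ C) subset_union_left, LinearMap.sum_apply]
  exact (sum_subset subset_union_right fun j _ hj => by simp [hC j hj]).symm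

theorem exists_forall_sum_Ico {f : ℤ → Module.End R V} (hT : HasLocallyFiniteSum f T) (v : V) :
    ∃ K, ∀ a b, a ≤ -K → K ≤ b → T v = ∑ j ∈ Ico a b, f j v := by
  obtain ⟨A, hA⟩ := hT v
  obtain ⟨K, hK⟩ := (A.image (|·|)).bddAbove
  refine ⟨K + 1, fun a b ha hb => hA _ fun j hj => ?_⟩
  have hj' := abs_le.1 (hK (mem_image_of_mem _ hj))
  rw [mem_Ico]
  omega

end HasLocallyFiniteSum

end LocallyFiniteSum

theorem neg_one_zpow_eq_of_even_sub {K : Type*} [DivisionRing K] {a b : ℤ} (h : Even (a - b)) :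
    (-1 : K) ^ a = (-1) ^ b := by
  rw [← sub_add_cancel a b, zpow_add₀ (neg_ne_zero.2 one_ne_zero), h.neg_one_zpow, one_mul]

theorem Ring.lie_mul {A : Type*} [Ring A] (x y z : A) :
    ⁅x, y * z⁆ = ⁅x, y⁆ * z + y * ⁅x, z⁆ := by
  simp only [Ring.lie_def]
  noncomm_ring

section Clifford

variable {A : Type*} [Ring A] {ψ : ℤ → A}

def IsCliffordFamily (ψ : ℤ → A) : Prop :=
  ∀ a b : ℤ, ψ a * ψ b + ψ b * ψ a = if a + b = -1 then 1 else 0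

def normalOrder (ψ : ℤ → A) (a b : ℤ) : A :=
  if 0 ≤ b then ψ a * ψ b else -(ψ b * ψ a)

theorem normalOrder_eq_mul_sub (hCl : IsCliffordFamily ψ) (a b : ℤ) :
    normalOrder ψ a b = ψ a * ψ b - if b < 0 ∧ a + b = -1 then 1 else 0 := by
  by_cases hb : 0 ≤ b
  · simp [normalOrder, hb, not_lt.2 hb]
  · simp only [normalOrder, if_neg hb, not_le.1 hb, true_and]
    rw [← hCl a b]
    abel

theorem lie_normalOrder (hCl : IsCliffordFamily ψ) (x : A) (a b : ℤ) :
    ⁅x, normalOrder ψ a b⁆ = ⁅x, ψ a * ψ b⁆ := by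
  rw [normalOrder_eq_mul_sub hCl]
  split_ifs
  · simp only [Ring.lie_def]
    noncomm_ring
  · rw [sub_zero]

theorem lie_psi_mul_psi (hCl : IsCliffordFamily ψ) (a b c : ℤ) :
    ⁅ψ c, ψ a * ψ b⁆ =
      (if a + c = -1 then ψ b else 0) - if b + c = -1 then ψ a else 0 := by
  have : ⁅ψ c, ψ a * ψ b⁆ =
      (ψ a * ψ c + ψ c * ψ a) * ψ b - ψ a * (ψ b * ψ c + ψ c * ψ b) := by
    rw [Ring.lie_def]
    noncomm_ring
  rw [this, hCl, hCl]
  split_ifs <;> simp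

end Clifford

section Heisenberg

attribute [local instance] LieRing.ofAssociativeRing

variable {V : Type*} [AddCommGroup V] [Module ℚ V] {ψ : ℤ → Module.End ℚ V}

-- `ψ j` stands for `φ_{j+1/2}`: this is the `k = j + 1/2` term of `h_n`.
def heisenbergSummand (ψ : ℤ → Module.End ℚ V) (n j : ℤ) : Module.End ℚ V :=
  (1 / 2 : ℚ) • (-1 : ℚ) ^ (j + 1) • normalOrder ψ (-j - 1) (j + 2 * n)

theorem lie_heisenberg_psi
    (hCl : IsCliffordFamily ψ) {T : Module.End ℚ V} {m : ℤ}
    (hT : HasLocallyFiniteSum (heisenbergSummand ψ m) T) (k : ℤ) :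
    ⁅T, ψ k⁆ = (-1 : ℚ) ^ k • ψ (k + 2 * m) := by
  have hsupp : ∀ j ∉ ({k, -k - 2 * m - 1} : Finset ℤ),
      ⁅ψ k, heisenbergSummand ψ m j⁆ = 0 := by
    intro j hj
    simp only [mem_insert, mem_singleton, not_or] at hj
    rw [heisenbergSummand, lie_smul, lie_smul, lie_normalOrder hCl, lie_psi_mul_psi hCl,
      if_neg (by omega), if_neg (by omega), sub_zero, smul_zero, smul_zero]
  rw [← lie_skew, (hT.lie_right (ψ k)).eq_sum_of_support_subset hsupp, sum_pair (by omega)]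
  simp only [heisenbergSummand, lie_smul, lie_normalOrder hCl, lie_psi_mul_psi hCl]
  rw [if_pos (by ring), if_neg (by omega), if_neg (by omega), if_pos (by ring),
    show -(-k - 2 * m - 1) - 1 = k + 2 * m by ring, zpow_add_one₀ (neg_ne_zero.2 one_ne_zero),
    neg_one_zpow_eq_of_even_sub (a := -k - 2 * m - 1 + 1) (b := k) ⟨-k - m, by ring⟩]
  module

theorem lie_heisenberg_heisenbergSummand
    (hCl : IsCliffordFamily ψ) {T : Module.End ℚ V} {m : ℤ}
    (hT : HasLocallyFiniteSum (heisenbergSummand ψ m) T) (n j : ℤ) :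
    ⁅T, heisenbergSummand ψ n j⁆ = (1 / 2 : ℚ) • (ψ (-(j - 2 * m) - 1) *
      ψ (j - 2 * m + 2 * (m + n)) - ψ (-j - 1) * ψ (j + 2 * (m + n))) := by
  have hs : (-1 : ℚ) ^ (j + 1) * (-1) ^ (j + 1) = 1 := by
    rw [← zpow_add₀ (neg_ne_zero.2 one_ne_zero), Even.neg_one_zpow ⟨j + 1, rfl⟩]
  rw [heisenbergSummand, lie_smul, lie_smul, lie_normalOrder hCl, Ring.lie_mul,
    lie_heisenberg_psi hCl hT, lie_heisenberg_psi hCl hT, smul_mul_assoc, mul_smul_comm,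
    show -(j - 2 * m) - 1 = -j - 1 + 2 * m by ring,
    show j - 2 * m + 2 * (m + n) = j + 2 * n by ring,
    show j + 2 * (m + n) = j + 2 * n + 2 * m by ring,
    neg_one_zpow_eq_of_even_sub (a := -j - 1) (b := j + 1) ⟨-j - 1, by ring⟩,
    neg_one_zpow_eq_of_even_sub (a := j + 2 * n) (b := j + 1 + 1) ⟨n - 1, by ring⟩,
    zpow_add_one₀ (neg_ne_zero.2 one_ne_zero) (j + 1)]
  linear_combination (norm := module)
    hs • ((1 / 2 : ℚ) •
      (ψ (-j - 1 + 2 * m) * ψ (j + 2 * n) - ψ (-j - 1) * ψ (j + 2 * n + 2 * m)))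

theorem psi_neg_mul_psi_apply_of_lt (hCl : IsCliffordFamily ψ)
    {v : V} {N : ℤ} (hv : ∀ k, N ≤ k → ψ k v = 0) {p j : ℤ} (hj : j < -(|N| + 2 * |p|)) :
    (ψ (-j - 1) * ψ (j + 2 * p)) v = if p = 0 then v else 0 := by
  have hN := le_abs_self N
  have hp := abs_le.1 (le_refl |p|)
  rw [eq_sub_of_add_eq (hCl _ _), if_congr (by omega : -j - 1 + (j + 2 * p) = -1 ↔ p = 0) rfl rfl]
  split_ifs <;> simp [hv (-j - 1) (by omega)]

theorem psi_neg_mul_psi_apply_of_le {v : V} {N : ℤ} (hv : ∀ k, N ≤ k → ψ k v = 0)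
    {p j : ℤ} (hj : |N| + 2 * |p| ≤ j) : (ψ (-j - 1) * ψ (j + 2 * p)) v = 0 := by
  have hN := le_abs_self N
  have hp := abs_le.1 (le_refl |p|)
  rw [Module.End.mul_apply, hv (j + 2 * p) (by omega), map_zero]

end Heisenberg

/-- In the Clifford algebra with generators `φ_m`, `m ∈ ℤ + 1/2` (here `ψ j` denotes
`φ_{j+1/2}` for `j : ℤ`), acting on a Fock-type representation (each vector is annihilated
by almost all annihilation modes), the modes `h_n` of `h(z) = (1/2):φ(z)φ(-z):`, given by
`h_n = (1/2) ∑_{k ∈ ℤ+1/2} (-1)^{k+1/2} :φ_{-k} φ_{k+2n}:` (a locally finite sum, normal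
ordering being `:φ_a φ_b: = φ_a φ_b` if `b > 0` and `-φ_b φ_a` otherwise), satisfy the
Heisenberg commutation relations `[h_m, h_n] = m δ_{m+n,0}·1`. -/
theorem heisenberg_from_clifford {V : Type*} [AddCommGroup V] [Module ℚ V]
    (ψ : ℤ → Module.End ℚ V)
    (hCl : ∀ a b : ℤ, ψ a * ψ b + ψ b * ψ a =
      if a + b = -1 then (1 : Module.End ℚ V) else 0)
    (hFock : ∀ v : V, ∃ N : ℤ, ∀ k : ℤ, N ≤ k → ψ k v = 0)
    (NO : ℤ → ℤ → Module.End ℚ V)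
    (hNO : ∀ a b : ℤ, NO a b = if 0 ≤ b then ψ a * ψ b else -(ψ b * ψ a))
    (h : ℤ → Module.End ℚ V)
    (hh : ∀ (n : ℤ) (v : V), ∃ A : Finset ℤ, ∀ B : Finset ℤ, A ⊆ B →
      h n v = (1 / 2 : ℚ) • ∑ j ∈ B, ((-1 : ℚ) ^ (j + 1)) • NO (-j - 1) (j + 2 * n) v) :
    ∀ m n : ℤ, ⁅h m, h n⁆ =
      if m + n = 0 then (m : ℚ) • (1 : Module.End ℚ V) else 0 := by
  intro m n
  obtain rfl : NO = normalOrder ψ := funext₂ hNO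
  have hsum (n : ℤ) : HasLocallyFiniteSum (heisenbergSummand ψ n) (h n) := by
    simpa only [HasLocallyFiniteSum, heisenbergSummand, LinearMap.smul_apply, smul_sum] using hh n
  ext v
  obtain ⟨N, hN⟩ := hFock v
  have hlie : HasLocallyFiniteSum (fun j => (1 / 2 : ℚ) •
      (ψ (-(j - 2 * m) - 1) * ψ (j - 2 * m + 2 * (m + n)) - ψ (-j - 1) * ψ (j + 2 * (m + n))))
      ⁅h m, h n⁆ := by
    simpa only [lie_heisenberg_heisenbergSummand hCl (hsum m)] using (hsum n).lie_right (h m)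
  obtain ⟨K, hK⟩ := hlie.exists_forall_sum_Ico v
  set L := max K (|N| + 2 * |m + n| + |2 * m|)
  have hL : |N| + 2 * |m + n| + |2 * m| ≤ L := le_max_right _ _
  simp only [hK (-L) L (by omega) (le_max_left _ _), LinearMap.smul_apply, LinearMap.sub_apply]
  set g : ℤ → V := fun j => (ψ (-j - 1) * ψ (j + 2 * (m + n))) v
  rw [← smul_sum, sum_Ico_sub_shift_eq_zsmul (g := g) (by positivity)
    (fun j hj => psi_neg_mul_psi_apply_of_lt hCl hN hj)
    (fun j hj => psi_neg_mul_psi_apply_of_le hN hj)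
    (2 * m) (by omega) (by omega)]
  split_ifs
  · rw [LinearMap.smul_apply, Module.End.one_apply]
    module
  · rw [smul_zero, smul_zero, LinearMap.zero_apply]
end

section
/- Let b, λ be real with λ = 1/2. The highest weight of the charge-n sector under L^{1/2,b} is h_n = (b-n)²/2. If b = n₁ + m/√2 for integers n₁, m, then h_{n₁} = m²/4, and for n ≠ n₁, h_n = (m - √2(n - n₁))²/4 is not of the form k²/4 for any integer k. -/
lemma sqrt_two_key (m d k : ℤ) (hd : (d : ℝ) ≠ 0)
    (h : ((m : ℝ) - Real.sqrt 2 * (d : ℝ)) ^ 2 = (k : ℝ) ^ 2) : False := by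
  have hs : Real.sqrt 2 ^ 2 = 2 := Real.sq_sqrt (by norm_num)
  have hirr := irrational_sqrt_two
  by_cases hm : (m : ℝ) = 0
  · -- then k² = 2 d², so √2 = |k/d| rational
    rw [hm] at h
    have hkd : (2 : ℝ) = ((k : ℝ) / (d : ℝ)) ^ 2 := by
      field_simp
      nlinarith [hs, h]
    have h2 : Real.sqrt 2 = |(k : ℝ) / (d : ℝ)| := by
      rw [hkd, Real.sqrt_sq_eq_abs]
    apply hirr
    exact ⟨|(k : ℚ) / (d : ℚ)|, by push_cast; rw [h2]⟩
  · have hmd : (2 : ℝ) * m * d ≠ 0 := by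
      intro h0
      rcases mul_eq_zero.mp h0 with h1 | h1
      · rcases mul_eq_zero.mp h1 with h2 | h2
        · norm_num at h2
        · exact hm h2
      · exact hd h1
    have h2 : Real.sqrt 2 = ((m : ℝ) ^ 2 + 2 * (d : ℝ) ^ 2 - (k : ℝ) ^ 2) / (2 * m * d) := by
      field_simp
      nlinarith [hs]
    apply hirr
    refine ⟨((m : ℚ) ^ 2 + 2 * (d : ℚ) ^ 2 - (k : ℚ) ^ 2) / (2 * (m : ℚ) * (d : ℚ)), ?_⟩
    push_cast
    rw [h2]

/-- Let `λ = 1/2` and let `h_n = (b-n)²/2` be the highest weight of the charge-`n` sector under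
`L^{1/2,b}`. If `b = n₁ + m/√2` for integers `n₁, m`, then `h_{n₁} = m²/4`, and for `n ≠ n₁`,
`h_n = (m - √2(n-n₁))²/4` is not of the form `k²/4` for any integer `k`. -/
theorem reducible_sector_weights (b l : ℝ) (hl : l = 1 / 2)
    (hw : ℤ → ℝ) (hhw : ∀ n : ℤ, hw n = (b - (n : ℝ)) ^ 2 / 2)
    (n₁ m : ℤ) (hb : b = (n₁ : ℝ) + (m : ℝ) / Real.sqrt 2) :
    hw n₁ = (m : ℝ) ^ 2 / 4 ∧
      ∀ n : ℤ, n ≠ n₁ →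
        hw n = ((m : ℝ) - Real.sqrt 2 * ((n : ℝ) - (n₁ : ℝ))) ^ 2 / 4 ∧
        ¬∃ k : ℤ, hw n = (k : ℝ) ^ 2 / 4 := by
  have hs : Real.sqrt 2 ^ 2 = 2 := Real.sq_sqrt (by norm_num)
  have hspos : Real.sqrt 2 > 0 := Real.sqrt_pos.mpr (by norm_num)
  have hsne : Real.sqrt 2 ≠ 0 := ne_of_gt hspos
  constructor
  · rw [hhw, hb]
    field_simp
    nlinarith [hs]
  · intro n hn
    have hform : hw n = ((m : ℝ) - Real.sqrt 2 * ((n : ℝ) - (n₁ : ℝ))) ^ 2 / 4 := by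
      rw [hhw, hb]
      field_simp
      nlinarith [hs]
    refine ⟨hform, ?_⟩
    rintro ⟨k, hk⟩
    have hd : ((n - n₁ : ℤ) : ℝ) ≠ 0 := by
      simpa using sub_ne_zero.mpr (by exact_mod_cast hn : (n : ℝ) ≠ (n₁ : ℝ))
    apply sqrt_two_key m (n - n₁) k hd
    have : ((m : ℝ) - Real.sqrt 2 * ((n : ℝ) - (n₁ : ℝ))) ^ 2 / 4 = (k : ℝ) ^ 2 / 4 := by
      rw [← hform, hk]
    push_cast
    linarith
end
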